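/- arXiv:2412.19203 — 2 statements merged into one kernel-verified Lean document; each statement's English description precedes it below -/
import Mathlib

section
/- In the girth-4 setting: no vertex of T₀ is adjacent to any vertex of T₁. -/
/-- The adjacency matrix of a simple graph over `ℝ` is Hermitian. -/
lemma adjMatrix_isHermitian {V : Type*} [Fintype V] (G : SimpleGraph V)
    [DecidableRel G.Adj] : ((G.adjMatrix ℝ)).IsHermitian := by
  rw [Matrix.IsHermitian, Matrix.conjTranspose_eq_transpose_of_trivial]
  exact G.isSymm_adjMatrix

/-- The number of eigenvalues (counted with multiplicity) of the real adjacency matrix of `G`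
satisfying the predicate `p`. -/
noncomputable def eigCount {V : Type*} [Fintype V] [DecidableEq V]
    (G : SimpleGraph V) (p : ℝ → Prop) : ℕ := by
  classical
  exact (Finset.univ.filter fun i =>
    p ((adjMatrix_isHermitian G).eigenvalues i)).card
/-- `HasMinor G H` : `H` is a minor of `G`, witnessed by a family of pairwise disjoint
nonempty branch sets, each inducing a connected subgraph of `G`, such that every edge of `H`
is realized by an edge of `G` between the corresponding branch sets. -/
def HasMinor {V : Type*} {W : Type*} (G : SimpleGraph V) (H : SimpleGraph W) : Prop :=
  ∃ B : W → Set V,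
    (∀ w, (B w).Nonempty) ∧
    (Pairwise fun w₁ w₂ => Disjoint (B w₁) (B w₂)) ∧
    (∀ w, (G.induce (B w)).Connected) ∧
    (∀ ⦃w₁ w₂⦄, H.Adj w₁ w₂ → ∃ a ∈ B w₁, ∃ b ∈ B w₂, G.Adj a b)

/-- `G` is planar in the sense of Wagner: it has neither `K₅` nor `K_{3,3}` as a minor. -/
def WagnerPlanar {V : Type*} (G : SimpleGraph V) : Prop :=
  ¬ HasMinor G (⊤ : SimpleGraph (Fin 5)) ∧
    ¬ HasMinor G (completeBipartiteGraph (Fin 3) (Fin 3))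
/-- For a 4-cycle `x₀x₁x₂x₃x₀` in `G` and `S ⊆ Fin 4`, the set
`T_S = {v ∉ {x₀,x₁,x₂,x₃} : N(v) ∩ {x₀,x₁,x₂,x₃} = {x i : i ∈ S}}`. -/
def TS {V : Type*} (G : SimpleGraph V) (x : Fin 4 → V) (S : Set (Fin 4)) : Set V :=
  {v | v ∉ Set.range x ∧ ∀ i, G.Adj v (x i) ↔ i ∈ S}

/-- The set `T_j` of vertices outside the 4-cycle having exactly `j` neighbors among
`{x₀,x₁,x₂,x₃}`. -/
def Tdeg {V : Type*} (G : SimpleGraph V) (x : Fin 4 → V) (j : ℕ) : Set V :=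
  {v | v ∉ Set.range x ∧ {i : Fin 4 | G.Adj v (x i)}.ncard = j}

/-!
Suppose `v ∈ T₀` is adjacent to `u ∈ T₁`, and let `x k` be the unique neighbour of `u` on the
cycle. As `G` is triangle-free the 4-cycle is induced, so `v, u, x k, …, x (k + 3)` induce the
tadpole graph `T(4,2)`: a 4-cycle with a pendant path of length two. Supported on these six
vertices, the vector `z = a • (1,1,1,0,0,0) + b • (2,2,0,-1,-1,-1)` satisfies
`zᵀ A z - zᵀ z = a² + b²` for the adjacency matrix `A`. By the min-max principle `A` therefore
has two eigenvalues greater than `1`, contradicting `λ₂(G) ≤ 1`.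
-/

open Matrix Module Finset

namespace Matrix

variable {n m k R : Type*} [Fintype n] [Fintype m]

theorem mulVec_mulVec_dotProduct_mulVec [CommSemiring R] (M : Matrix n n R) (U : Matrix n m R)
    (c : m → R) : (M *ᵥ U *ᵥ c) ⬝ᵥ (U *ᵥ c) = ((Uᵀ * M * U) *ᵥ c) ⬝ᵥ c := by
  rw [dotProduct_comm, dotProduct_mulVec, dotProduct_mulVec, ← vecMul_transpose U c,
    vecMul_vecMul, vecMul_vecMul, ← dotProduct_mulVec, dotProduct_comm, Matrix.mul_assoc]

theorem transpose_mul_mul_submatrix_one [CommSemiring R] [DecidableEq n] (M : Matrix n n R)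
    (e : k → n) :
    ((1 : Matrix n n R).submatrix id e)ᵀ * M * (1 : Matrix n n R).submatrix id e =
      M.submatrix e e := by
  ext i j
  simp [mul_apply, one_apply]

namespace IsHermitian

variable [DecidableEq n] {A : Matrix n n ℝ} (hA : A.IsHermitian)

theorem eigenvectorUnitary_mulVec_star_mulVec (z : n → ℝ) :
    (hA.eigenvectorUnitary : Matrix n n ℝ) *ᵥ (star (hA.eigenvectorUnitary : Matrix n n ℝ) *ᵥ z)
      = z := by
  rw [mulVec_mulVec, Unitary.mul_star_self_of_mem hA.eigenvectorUnitary.2, one_mulVec]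

theorem dotProduct_mulVec_eq_sum_eigenvalues (z : n → ℝ) :
    (A *ᵥ z) ⬝ᵥ z =
      ∑ i, hA.eigenvalues i * ((star (hA.eigenvectorUnitary : Matrix n n ℝ) *ᵥ z) i) ^ 2 := by
  have hdiag : (hA.eigenvectorUnitary : Matrix n n ℝ)ᵀ * A * hA.eigenvectorUnitary =
      diagonal hA.eigenvalues := by
    simpa [Unitary.conjStarAlgAut_apply, star_eq_conjTranspose] using
      hA.conjStarAlgAut_star_eigenvectorUnitary
  conv_lhs => rw [← hA.eigenvectorUnitary_mulVec_star_mulVec z, mulVec_mulVec_dotProduct_mulVec,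
    hdiag]
  simp [dotProduct, mulVec_diagonal, sq, mul_assoc]

theorem dotProduct_self_eq_sum_sq (z : n → ℝ) :
    z ⬝ᵥ z = ∑ i, ((star (hA.eigenvectorUnitary : Matrix n n ℝ) *ᵥ z) i) ^ 2 := by
  have horth : (hA.eigenvectorUnitary : Matrix n n ℝ)ᵀ * 1 * hA.eigenvectorUnitary = 1 := by
    rw [Matrix.mul_one, ← conjTranspose_eq_transpose_of_trivial, ← star_eq_conjTranspose,
      Unitary.star_mul_self_of_mem hA.eigenvectorUnitary.2]
  nth_rw 1 [← one_mulVec z]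
  conv_lhs => rw [← hA.eigenvectorUnitary_mulVec_star_mulVec z, mulVec_mulVec_dotProduct_mulVec,
    horth, one_mulVec]
  simp [dotProduct, sq]

theorem dotProduct_mulVec_le_mul_dotProduct_self (c : ℝ) (z : n → ℝ)
    (hz : ∀ i, c < hA.eigenvalues i → (star (hA.eigenvectorUnitary : Matrix n n ℝ) *ᵥ z) i = 0) :
    (A *ᵥ z) ⬝ᵥ z ≤ c * (z ⬝ᵥ z) := by
  rw [hA.dotProduct_mulVec_eq_sum_eigenvalues, hA.dotProduct_self_eq_sum_sq, Finset.mul_sum]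
  refine Finset.sum_le_sum fun i _ => ?_
  by_cases hi : c < hA.eigenvalues i
  · simp [hz i hi]
  · exact mul_le_mul_of_nonneg_right (not_lt.mp hi) (sq_nonneg _)

/-- The easy half of the Courant–Fischer min-max principle. -/
theorem card_le_card_eigenvalues_gt (c : ℝ) (P : Matrix n m ℝ)
    (hP : ∀ ω ≠ 0, c * ((P *ᵥ ω) ⬝ᵥ (P *ᵥ ω)) < (A *ᵥ P *ᵥ ω) ⬝ᵥ (P *ᵥ ω)) :
    Fintype.card m ≤ #{i | c < hA.eigenvalues i} := by
  by_contra! hlt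
  let f : (m → ℝ) →ₗ[ℝ] ({i // c < hA.eigenvalues i} → ℝ) :=
    ((star (hA.eigenvectorUnitary : Matrix n n ℝ) * P).submatrix Subtype.val id).mulVecLin
  have hrank : finrank ℝ ({i // c < hA.eigenvalues i} → ℝ) < finrank ℝ (m → ℝ) := by
    simpa [Fintype.card_subtype] using hlt
  obtain ⟨ω, hω, hω0⟩ :=
    (Submodule.ne_bot_iff _).mp (LinearMap.ker_ne_bot_of_finrank_lt (f := f) hrank)
  refine (hP ω hω0).not_ge (hA.dotProduct_mulVec_le_mul_dotProduct_self c _ fun i hi => ?_)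
  rw [mulVec_mulVec]
  exact congr_fun (LinearMap.mem_ker.mp hω) ⟨i, hi⟩

theorem card_le_card_eigenvalues_gt_of_submatrix [Fintype k] (c : ℝ) {e : k → n}
    (he : Function.Injective e) (Ω : Matrix k m ℝ)
    (hΩ : ∀ ω ≠ 0, c * ((Ω *ᵥ ω) ⬝ᵥ (Ω *ᵥ ω)) < (A.submatrix e e *ᵥ Ω *ᵥ ω) ⬝ᵥ (Ω *ᵥ ω)) :
    Fintype.card m ≤ #{i | c < hA.eigenvalues i} := by
  classical
  refine hA.card_le_card_eigenvalues_gt c ((1 : Matrix n n ℝ).submatrix id e * Ω) fun ω hω => ?_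
  have hnorm := mulVec_mulVec_dotProduct_mulVec 1 ((1 : Matrix n n ℝ).submatrix id e) (Ω *ᵥ ω)
  rw [transpose_mul_mul_submatrix_one, submatrix_one e he, one_mulVec, one_mulVec] at hnorm
  rw [← mulVec_mulVec, hnorm, mulVec_mulVec_dotProduct_mulVec, transpose_mul_mul_submatrix_one]
  exact hΩ ω hω

end IsHermitian
end Matrix

def tadpole : SimpleGraph (Fin 6) :=
  SimpleGraph.fromEdgeSet {s(0, 1), s(1, 2), s(2, 3), s(3, 4), s(4, 5), s(5, 2)}

instance : DecidableRel tadpole.Adj := by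
  unfold tadpole
  infer_instance

def tadpoleTestVectors : Matrix (Fin 6) (Fin 2) ℝ :=
  !![1, 2; 1, 2; 1, 0; 0, -1; 0, -1; 0, -1]

theorem tadpole_adjMatrix_mulVec_dotProduct (z : Fin 2 → ℝ) :
    (tadpole.adjMatrix ℝ *ᵥ tadpoleTestVectors *ᵥ z) ⬝ᵥ (tadpoleTestVectors *ᵥ z) =
      (tadpoleTestVectors *ᵥ z) ⬝ᵥ (tadpoleTestVectors *ᵥ z) + z ⬝ᵥ z := by
  simp +decide [tadpoleTestVectors, dotProduct, mulVec, Fin.sum_univ_succ,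
    SimpleGraph.adjMatrix_apply]
  ring

namespace SimpleGraph

variable {V : Type*} {G : SimpleGraph V}

theorem one_lt_eigCount_of_tadpole_embedding [Fintype V] [DecidableEq V]
    (f : tadpole ↪g G) : 1 < eigCount G (fun t => 1 < t) := by
  classical
  have := (adjMatrix_isHermitian G).card_le_card_eigenvalues_gt_of_submatrix 1 f.injective
    tadpoleTestVectors fun ω hω => by
      rw [f.submatrix_adjMatrix ℝ, tadpole_adjMatrix_mulVec_dotProduct, one_mul,
        lt_add_iff_pos_right]
      exact lt_of_le_of_ne (Finset.sum_nonneg fun i _ => mul_self_nonneg _)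
        (Ne.symm (dotProduct_self_eq_zero.not.mpr hω))
  unfold eigCount
  exact this

theorem CliqueFree.adj_iff_of_adj_add_one (htf : G.CliqueFree 3) {y : Fin 4 → V}
    (hcyc : ∀ i, G.Adj (y i) (y (i + 1))) (i j : Fin 4) :
    G.Adj (y i) (y j) ↔ j = i + 1 ∨ i = j + 1 := by
  classical
  obtain ⟨d, rfl⟩ : ∃ d, j = i + d := ⟨j - i, by abel⟩
  fin_cases d
  · simp
  · simpa using hcyc i
  · refine iff_of_false (fun h => htf {y i, y (i + 1), y (i + 2)} ?_) (by simp [add_assoc])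
    exact is3Clique_triple_iff.mpr
      ⟨hcyc i, h, by simpa [add_assoc, one_add_one_eq_two] using hcyc (i + 1)⟩
  · simpa [add_assoc] using (hcyc (i + 3)).symm

theorem nonempty_tadpole_embedding (htf : G.CliqueFree 3) {y : Fin 4 → V}
    (hinj : Function.Injective y) (hcyc : ∀ i, G.Adj (y i) (y (i + 1))) {u v : V}
    (hvu : G.Adj v u) (hv : ∀ i, ¬ G.Adj v (y i)) (hu : ∀ i, G.Adj u (y i) ↔ i = 0)
    (hvy : v ∉ Set.range y) (huy : u ∉ Set.range y) : Nonempty (tadpole ↪g G) := by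
  have hy := htf.adj_iff_of_adj_add_one hcyc
  have hv' : ∀ i, ¬ G.Adj (y i) v := fun i h => hv i h.symm
  have hu' : ∀ i, G.Adj (y i) u ↔ i = 0 := fun i => G.adj_comm _ _ |>.trans (hu i)
  let f : Fin 6 → V := vecCons v (vecCons u y)
  have hf : Function.Injective f := by
    simp [f, vecCons, Fin.cons_injective_iff, hinj, hvy, huy, hvu.ne]
  have hadj : ∀ a b, G.Adj (f a) (f b) ↔ tadpole.Adj a b := by
    intro a b
    fin_cases a <;> fin_cases b <;> simp +decide [f, hy, hv, hu, hv', hu', hvu, hvu.symm]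
  exact ⟨⟨⟨f, hf⟩, hadj _ _⟩⟩

end SimpleGraph

theorem girth_four_no_T0_T1_edge_general {V : Type*} [Fintype V] [DecidableEq V] (G : SimpleGraph V)
    (htf : G.CliqueFree 3) (hl : eigCount G (fun t => 1 < t) ≤ 1)
    (x : Fin 4 → V) (hinj : Function.Injective x) (hcyc : ∀ i, G.Adj (x i) (x (i + 1))) :
    ∀ v ∈ Tdeg G x 0, ∀ u ∈ Tdeg G x 1, ¬ G.Adj v u := by
  rintro v ⟨hvx, hv0⟩ u ⟨hux, hu1⟩ hvu
  have hv : ∀ i, ¬ G.Adj v (x i) := by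
    simpa [Set.eq_empty_iff_forall_notMem] using (Set.ncard_eq_zero (Set.toFinite _)).mp hv0
  obtain ⟨k, hk⟩ := Set.ncard_eq_one.mp hu1
  obtain ⟨f⟩ := G.nonempty_tadpole_embedding htf (y := fun i => x (k + i))
    (hinj.comp (add_right_injective k)) (fun i => by simpa [add_assoc] using hcyc (k + i)) hvu
    (fun _ => hv _) (fun i => by simpa using Set.ext_iff.mp hk (k + i))
    (fun ⟨i, h⟩ => hvx ⟨k + i, h⟩) (fun ⟨i, h⟩ => hux ⟨k + i, h⟩)
  have := SimpleGraph.one_lt_eigCount_of_tadpole_embedding f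
  omega

/-- in the girth-4 setting, no vertex of `T₀` is adjacent to any vertex of
`T₁`. -/
theorem girth_four_no_T0_T1_edge {V : Type*} [Fintype V] [DecidableEq V] (G : SimpleGraph V)
    (hconn : G.Connected) (htf : G.CliqueFree 3)
    (hl : eigCount G (fun t => 1 < t) ≤ 1) (hplanar : WagnerPlanar G)
    (hgirth : G.egirth = 4) (x : Fin 4 → V) (hinj : Function.Injective x)
    (hcyc : ∀ i, G.Adj (x i) (x (i + 1))) :
    ∀ v ∈ Tdeg G x 0, ∀ u ∈ Tdeg G x 1, ¬ G.Adj v u :=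
  girth_four_no_T0_T1_edge_general G htf hl x hinj hcyc
end

section
/- In the girth-4 setting: T₀ is an independent set of G; consequently, every neighbor of every vertex of T₀ belongs to T₂. -/
open Matrix Finset

lemma Matrix.IsHermitian.dotProduct_sub_smul_one_mulVec_eq_sum {n : Type*} [Fintype n]
    [DecidableEq n] {A : Matrix n n ℝ} (hA : A.IsHermitian) (t : ℝ) (w : n → ℝ) :
    w ⬝ᵥ (A - t • 1) *ᵥ w =
      ∑ i, (hA.eigenvalues i - t) * (⇑(hA.eigenvectorBasis i) ⬝ᵥ w) ^ 2 := by
  have hw : w = ∑ i, (⇑(hA.eigenvectorBasis i) ⬝ᵥ w) • ⇑(hA.eigenvectorBasis i) := by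
    have := congrArg WithLp.ofLp (hA.eigenvectorBasis.sum_repr' (WithLp.toLp 2 w))
    simpa [EuclideanSpace.inner_eq_star_dotProduct, dotProduct_comm] using this.symm
  have hAw : (A - t • 1) *ᵥ w = ∑ i,
      ((hA.eigenvalues i - t) * (⇑(hA.eigenvectorBasis i) ⬝ᵥ w)) • ⇑(hA.eigenvectorBasis i) := by
    conv_lhs => rw [hw]
    refine (mulVec_sum _ _ _).trans (Finset.sum_congr rfl fun i _ => ?_)
    rw [mulVec_smul, sub_mulVec, smul_mulVec, one_mulVec, hA.mulVec_eigenvectorBasis, ← sub_smul,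
      smul_smul, mul_comm]
  rw [hAw, dotProduct_sum]
  refine Finset.sum_congr rfl fun i _ => ?_
  rw [dotProduct_smul, smul_eq_mul, dotProduct_comm]
  ring

lemma exists_ne_zero_mul_add_mul_eq_zero (a b : ℝ) :
    ∃ α β : ℝ, (α ≠ 0 ∨ β ≠ 0) ∧ α * a + β * b = 0 := by
  by_cases hb : b = 0
  · exact ⟨0, 1, by norm_num, by simp [hb]⟩
  · exact ⟨b, -a, .inl hb, by ring⟩

lemma quadratic_pos_of_sq_lt_mul {a b c α β : ℝ} (ha : 0 < a) (hb : b ^ 2 < a * c)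
    (hαβ : α ≠ 0 ∨ β ≠ 0) : 0 < α ^ 2 * a + 2 * α * β * b + β ^ 2 * c := by
  have key : a * (α ^ 2 * a + 2 * α * β * b + β ^ 2 * c) =
      (a * α + b * β) ^ 2 + (a * c - b ^ 2) * β ^ 2 := by ring
  refine pos_of_mul_pos_right (key ▸ ?_) ha.le
  rcases eq_or_ne β 0 with rfl | hβ
  · have hα : α ≠ 0 := hαβ.resolve_right (not_not.mpr rfl)
    simp only [mul_zero, add_zero, zero_pow two_ne_zero]
    positivity
  · have : 0 < (a * c - b ^ 2) * β ^ 2 := mul_pos (sub_pos.mpr hb) (by positivity)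
    positivity

/-- Courant–Fischer for the second eigenvalue: were there at most one eigenvalue above `t`, some
nonzero vector of the span of `y` and `z` would be orthogonal to its eigenvector, and the form of
`A - t • 1` would be nonpositive there. -/
theorem Matrix.IsHermitian.one_lt_card_eigenvalues_gt {n : Type*} [Fintype n] [DecidableEq n]
    {A : Matrix n n ℝ} (hA : A.IsHermitian) (t : ℝ) (y z : n → ℝ)
    (hy : 0 < y ⬝ᵥ (A - t • 1) *ᵥ y)
    (hyz : (y ⬝ᵥ (A - t • 1) *ᵥ z) ^ 2 <
      (y ⬝ᵥ (A - t • 1) *ᵥ y) * (z ⬝ᵥ (A - t • 1) *ᵥ z)) :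
    1 < #{i | t < hA.eigenvalues i} := by
  set M := A - t • 1
  by_contra! hle
  obtain ⟨α, β, hαβ, hker⟩ : ∃ α β : ℝ, (α ≠ 0 ∨ β ≠ 0) ∧ ∀ i, t < hA.eigenvalues i →
      α * (⇑(hA.eigenvectorBasis i) ⬝ᵥ y) + β * (⇑(hA.eigenvectorBasis i) ⬝ᵥ z) = 0 := by
    by_cases hF : ∃ e, t < hA.eigenvalues e
    · obtain ⟨e, he⟩ := hF
      obtain ⟨α, β, hαβ, h⟩ := exists_ne_zero_mul_add_mul_eq_zero
        (⇑(hA.eigenvectorBasis e) ⬝ᵥ y) (⇑(hA.eigenvectorBasis e) ⬝ᵥ z)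
      refine ⟨α, β, hαβ, fun i hi => ?_⟩
      rwa [Finset.card_le_one.mp hle i (by simpa) e (by simpa)]
    · simp only [not_exists, not_lt] at hF
      exact ⟨1, 0, .inl one_ne_zero, fun i hi => absurd hi (not_lt.mpr (hF i))⟩
  have hsymm : z ⬝ᵥ M *ᵥ y = y ⬝ᵥ M *ᵥ z := by
    have hMt : Mᵀ = M := by simp [M, ← conjTranspose_eq_transpose_of_trivial, hA.eq]
    rw [dotProduct_mulVec, dotProduct_comm, ← mulVec_transpose, hMt]
  have hexpand : (α • y + β • z) ⬝ᵥ M *ᵥ (α • y + β • z) =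
      α ^ 2 * (y ⬝ᵥ M *ᵥ y) + 2 * α * β * (y ⬝ᵥ M *ᵥ z) + β ^ 2 * (z ⬝ᵥ M *ᵥ z) := by
    simp only [mulVec_add, mulVec_smul, add_dotProduct, dotProduct_add, smul_dotProduct,
      dotProduct_smul, hsymm, smul_eq_mul]
    ring
  have hnonpos : (α • y + β • z) ⬝ᵥ M *ᵥ (α • y + β • z) ≤ 0 := by
    rw [hA.dotProduct_sub_smul_one_mulVec_eq_sum]
    refine Finset.sum_nonpos fun i _ => ?_
    rcases le_or_gt (hA.eigenvalues i) t with hi | hi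
    · exact mul_nonpos_of_nonpos_of_nonneg (sub_nonpos.mpr hi) (sq_nonneg _)
    · simp [dotProduct_add, dotProduct_smul, hker i hi]
  linarith [quadratic_pos_of_sq_lt_mul hy hyz hαβ]

lemma single_dotProduct_mulVec_single {n : Type*} [Fintype n] [DecidableEq n]
    (M : Matrix n n ℝ) (s t : n) (a b : ℝ) :
    Pi.single s a ⬝ᵥ M *ᵥ Pi.single t b = a * M s t * b := by
  rw [single_dotProduct, mulVec, dotProduct_single, mul_assoc]

lemma sum_single_dotProduct_mulVec_sum_single {n ι κ : Type*} [Fintype n] [DecidableEq n]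
    [Fintype ι] [Fintype κ] (M : Matrix n n ℝ) (p : ι → n) (q : κ → n) (a : ι → ℝ)
    (b : κ → ℝ) :
    (∑ i, Pi.single (p i) (a i)) ⬝ᵥ M *ᵥ ∑ j, Pi.single (q j) (b j) =
      ∑ i, ∑ j, a i * M (p i) (q j) * b j := by
  simp only [mulVec_sum, sum_dotProduct, dotProduct_sum, single_dotProduct_mulVec_single]
  exact Finset.sum_comm

namespace SimpleGraph

variable {V : Type*} {G : SimpleGraph V}

lemma CliqueFree.not_adj_of_adj_of_adj (htf : G.CliqueFree 3) {a b c : V} (hab : G.Adj a b)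
    (hbc : G.Adj b c) : ¬ G.Adj a c := by
  classical
  exact fun hac => htf {a, b, c} (is3Clique_triple_iff.mpr ⟨hab, hac, hbc⟩)

lemma adjMatrix_sub_one_apply [DecidableEq V] [DecidableRel G.Adj] (s t : V) :
    (G.adjMatrix ℝ - 1) s t = (if G.Adj s t then 1 else 0) - (if s = t then 1 else 0) := by
  simp [adjMatrix_apply, one_apply]

lemma quadForm_path [Fintype V] [DecidableEq V] [DecidableRel G.Adj] {p q r : V}
    (hpq : G.Adj p q) (hqr : G.Adj q r) (hpr : ¬ G.Adj p r) (hpr' : p ≠ r) (a b c : ℝ) :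
    (Pi.single p a + Pi.single q b + Pi.single r c) ⬝ᵥ
        (G.adjMatrix ℝ - 1) *ᵥ (Pi.single p a + Pi.single q b + Pi.single r c) =
      2 * a * b + 2 * b * c - a ^ 2 - b ^ 2 - c ^ 2 := by
  simp only [mulVec_add, add_dotProduct, dotProduct_add, single_dotProduct_mulVec_single,
    adjMatrix_sub_one_apply]
  simp [hpq, hqr, hpr, hpq.symm, hqr.symm, mt G.adj_symm hpr, hpq.ne, hqr.ne, hpq.ne.symm,
    hqr.ne.symm, hpr', hpr'.symm]
  ring

variable {x : Fin 4 → V}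

lemma CliqueFree.adj_cycle_iff (htf : G.CliqueFree 3) (hcyc : ∀ i, G.Adj (x i) (x (i + 1)))
    (i j : Fin 4) :
    G.Adj (x i) (x j) ↔ j = i + 1 ∨ i = j + 1 := by
  refine ⟨fun h => ?_, by rintro (rfl | rfl); exacts [hcyc i, (hcyc j).symm]⟩
  have key : ∀ i j : Fin 4, ¬(j = i + 1 ∨ i = j + 1) → j = i ∨ j = i + 2 := by decide
  by_contra hne
  obtain rfl | rfl := key i j hne
  · exact G.irrefl h
  · exact htf.not_adj_of_adj_of_adj (hcyc i) (by simpa [add_assoc] using hcyc (i + 1)) h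

lemma CliqueFree.card_adj_cycle_le_two [DecidableRel G.Adj] (htf : G.CliqueFree 3)
    (hcyc : ∀ i, G.Adj (x i) (x (i + 1))) (v : V) : #{i | G.Adj v (x i)} ≤ 2 := by
  have key : ∀ S : Finset (Fin 4), (∀ i ∈ S, i + 1 ∉ S) → #S ≤ 2 := by decide
  refine key _ fun i hi hi' => ?_
  simp only [mem_filter, mem_univ, true_and] at hi hi'
  exact htf.not_adj_of_adj_of_adj hi.symm hi' (hcyc i)

lemma CliqueFree.ncard_adj_cycle_le_two (htf : G.CliqueFree 3)
    (hcyc : ∀ i, G.Adj (x i) (x (i + 1))) (v : V) : {i | G.Adj v (x i)}.ncard ≤ 2 := by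
  classical
  rw [Set.ncard_eq_toFinset_card', Set.toFinset_ofPred]
  exact htf.card_adj_cycle_le_two hcyc v

lemma quadForm_fourCycle [Fintype V] [DecidableEq V] [DecidableRel G.Adj] (htf : G.CliqueFree 3)
    (hinj : Function.Injective x) (hcyc : ∀ i, G.Adj (x i) (x (i + 1))) :
    (∑ i, Pi.single (x i) (1 : ℝ)) ⬝ᵥ (G.adjMatrix ℝ - 1) *ᵥ ∑ i, Pi.single (x i) 1 = 4 := by
  rw [sum_single_dotProduct_mulVec_sum_single]
  simp only [adjMatrix_sub_one_apply, htf.adj_cycle_iff hcyc, hinj.eq_iff, Fin.sum_univ_four]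
  norm_num +decide

lemma Connected.exists_adj_mem_notMem (hG : G.Connected) {s : Set V} {u v : V} (hu : u ∈ s)
    (hv : v ∉ s) : ∃ a ∈ s, ∃ b ∉ s, G.Adj a b := by
  obtain ⟨p⟩ := hG.preconnected u v
  obtain ⟨d, -, hd₁, hd₂⟩ := p.exists_boundary_dart s hu hv
  exact ⟨d.fst, hd₁, d.snd, hd₂, d.adj⟩

end SimpleGraph

open SimpleGraph

section FourCycle

variable {V : Type*} {G : SimpleGraph V} {x : Fin 4 → V}

lemma one_lt_eigCount_of_quadForm [Fintype V] [DecidableEq V] [DecidableRel G.Adj]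
    (y z : V → ℝ) (hy : 0 < y ⬝ᵥ (G.adjMatrix ℝ - 1) *ᵥ y)
    (hyz : (y ⬝ᵥ (G.adjMatrix ℝ - 1) *ᵥ z) ^ 2 <
      (y ⬝ᵥ (G.adjMatrix ℝ - 1) *ᵥ y) * (z ⬝ᵥ (G.adjMatrix ℝ - 1) *ᵥ z)) :
    1 < eigCount G (1 < ·) := by
  unfold eigCount
  convert (adjMatrix_isHermitian G).one_lt_card_eigenvalues_gt 1 y z (by simpa) (by simpa)

lemma mem_Tdeg_zero {v : V} : v ∈ Tdeg G x 0 ↔ v ∉ Set.range x ∧ ∀ i, ¬ G.Adj v (x i) := by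
  simp only [Tdeg, Set.mem_ofPred_eq, Set.ncard_eq_zero (Set.toFinite _),
    Set.eq_empty_iff_forall_notMem]

theorem one_lt_eigCount_of_adj_of_mem_Tdeg_zero [Fintype V] [DecidableEq V]
    (htf : G.CliqueFree 3) (hinj : Function.Injective x) (hcyc : ∀ i, G.Adj (x i) (x (i + 1)))
    {a b w : V} (ha : a ∈ Tdeg G x 0) (hb : b ∈ Tdeg G x 0) (hab : G.Adj a b) (hbw : G.Adj b w)
    (hwa : w ≠ a) : 1 < eigCount G (1 < ·) := by
  classical
  rw [mem_Tdeg_zero] at ha hb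
  have hw : w ∉ Set.range x := by
    rintro ⟨i, rfl⟩
    exact hb.2 i hbw
  set y : V → ℝ := ∑ i, Pi.single (x i) 1
  set z : V → ℝ := Pi.single a 2 + Pi.single b 3 + Pi.single w 2
  have hy : y ⬝ᵥ (G.adjMatrix ℝ - 1) *ᵥ y = 4 := quadForm_fourCycle htf hinj hcyc
  have hz : z ⬝ᵥ (G.adjMatrix ℝ - 1) *ᵥ z = 7 := by
    rw [quadForm_path hab hbw (htf.not_adj_of_adj_of_adj hab hbw) hwa.symm]
    norm_num
  have hyz : y ⬝ᵥ (G.adjMatrix ℝ - 1) *ᵥ z = 2 * #{i | G.Adj w (x i)} := by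
    simp only [y, z, mulVec_add, dotProduct_add, sum_dotProduct,
      single_dotProduct_mulVec_single, adjMatrix_sub_one_apply]
    have hne {v : V} (hv : v ∉ Set.range x) (i : Fin 4) : x i ≠ v :=
      ne_of_mem_of_not_mem (Set.mem_range_self i) hv
    simp [hne ha.1, hne hb.1, hne hw, fun i => mt G.adj_symm (ha.2 i),
      fun i => mt G.adj_symm (hb.2 i), G.adj_comm _ w]
    rw [Finset.sum_ite, Finset.sum_const, Finset.sum_const_zero, nsmul_eq_mul]
    ring
  have hcard : (#{i | G.Adj w (x i)} : ℝ) ≤ 2 := by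
    exact_mod_cast htf.card_adj_cycle_le_two hcyc w
  refine one_lt_eigCount_of_quadForm y z (by rw [hy]; norm_num) ?_
  rw [hy, hz, hyz]
  nlinarith

theorem one_lt_eigCount_of_mem_TS_singleton_of_adj [Fintype V] [DecidableEq V]
    (htf : G.CliqueFree 3) (hinj : Function.Injective x) (hcyc : ∀ i, G.Adj (x i) (x (i + 1)))
    {i : Fin 4} {u v : V} (hu : u ∈ TS G x {i}) (hv : v ∈ Tdeg G x 0) (huv : G.Adj u v) :
    1 < eigCount G (1 < ·) := by
  classical
  rw [mem_Tdeg_zero] at hv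
  obtain ⟨hu, hux⟩ := hu
  simp only [Set.mem_singleton_iff] at hux
  have hiu : G.Adj (x i) u := ((hux i).mpr rfl).symm
  have h12 : G.Adj (x (i + 1)) (x (i + 2)) := by simpa [add_assoc] using hcyc (i + 1)
  have h23 : G.Adj (x (i + 2)) (x (i + 3)) := by simpa [add_assoc] using hcyc (i + 2)
  set y : V → ℝ := Pi.single (x (i + 1)) 2 + Pi.single (x (i + 2)) 3 + Pi.single (x (i + 3)) 2
  set z : V → ℝ := Pi.single (x i) 1 + Pi.single u 3 + Pi.single v 2
  have hy : y ⬝ᵥ (G.adjMatrix ℝ - 1) *ᵥ y = 7 := by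
    rw [quadForm_path h12 h23 (htf.not_adj_of_adj_of_adj h12 h23) (hinj.ne (by simp))]
    norm_num
  have hz : z ⬝ᵥ (G.adjMatrix ℝ - 1) *ᵥ z = 4 := by
    rw [quadForm_path hiu huv (fun h => hv.2 i h.symm) (fun h => hv.1 ⟨i, h⟩)]
    norm_num
  have hyz : y ⬝ᵥ (G.adjMatrix ℝ - 1) *ᵥ z = 4 := by
    simp only [y, z, mulVec_add, add_dotProduct, dotProduct_add,
      single_dotProduct_mulVec_single, adjMatrix_sub_one_apply]
    have hne {w : V} (hw : w ∉ Set.range x) (j : Fin 4) : x j ≠ w :=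
      ne_of_mem_of_not_mem (Set.mem_range_self j) hw
    simp +decide [htf.adj_cycle_iff hcyc, hinj.eq_iff, G.adj_comm _ u, G.adj_comm _ v, hux, hv.2,
      hne hu, hne hv.1, add_assoc]
    norm_num
  refine one_lt_eigCount_of_quadForm y z (by rw [hy]; norm_num) ?_
  rw [hy, hz, hyz]
  norm_num

end FourCycle

theorem girth_four_T0_independent_general {V : Type*} [Fintype V] [DecidableEq V] (G : SimpleGraph V)
    (hconn : G.Connected) (htf : G.CliqueFree 3)
    (hl : eigCount G (fun t => 1 < t) ≤ 1)
    (x : Fin 4 → V) (hinj : Function.Injective x)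
    (hcyc : ∀ i, G.Adj (x i) (x (i + 1))) :
    (∀ u ∈ Tdeg G x 0, ∀ v ∈ Tdeg G x 0, ¬ G.Adj u v) ∧
    (∀ v ∈ Tdeg G x 0, ∀ u : V, G.Adj v u → u ∈ Tdeg G x 2) := by
  have hspec : ¬ 1 < eigCount G (1 < ·) := hl.not_gt
  have indep : ∀ u ∈ Tdeg G x 0, ∀ v ∈ Tdeg G x 0, ¬ G.Adj u v := by
    intro u hu v hv huv
    have hx : x 0 ∉ ({u, v} : Set V) := by
      rintro (h | h)
      exacts [hu.1 ⟨0, h⟩, hv.1 ⟨0, h⟩]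
    obtain ⟨b, hb, w, hw, hbw⟩ := hconn.exists_adj_mem_notMem (Set.mem_insert u {v}) hx
    rcases hb with rfl | rfl
    · exact hspec (one_lt_eigCount_of_adj_of_mem_Tdeg_zero htf hinj hcyc hv hu huv.symm hbw
        fun h => hw (.inr h))
    · exact hspec (one_lt_eigCount_of_adj_of_mem_Tdeg_zero htf hinj hcyc hu hv huv hbw
        fun h => hw (.inl h))
  refine ⟨indep, fun v hv u hvu => ?_⟩
  have hu : u ∉ Set.range x := by
    rintro ⟨i, rfl⟩
    exact (mem_Tdeg_zero.mp hv).2 i hvu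
  have h0 : {i | G.Adj u (x i)}.ncard ≠ 0 := fun h => indep u ⟨hu, h⟩ v hv hvu.symm
  have h1 : {i | G.Adj u (x i)}.ncard ≠ 1 := fun h => by
    obtain ⟨i, hi⟩ := Set.ncard_eq_one.mp h
    exact hspec (one_lt_eigCount_of_mem_TS_singleton_of_adj htf hinj hcyc
      ⟨hu, Set.ext_iff.mp hi⟩ hv hvu.symm)
  have h2 := htf.ncard_adj_cycle_le_two hcyc u
  exact ⟨hu, by omega⟩

/-- in the girth-4 setting, `T₀` is an independent set of `G`; consequently
every neighbor of every vertex of `T₀` belongs to `T₂`. -/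
theorem girth_four_T0_independent {V : Type*} [Fintype V] [DecidableEq V] (G : SimpleGraph V)
    (hconn : G.Connected) (htf : G.CliqueFree 3)
    (hl : eigCount G (fun t => 1 < t) ≤ 1) (hplanar : WagnerPlanar G)
    (hgirth : G.egirth = 4) (x : Fin 4 → V) (hinj : Function.Injective x)
    (hcyc : ∀ i, G.Adj (x i) (x (i + 1))) :
    (∀ u ∈ Tdeg G x 0, ∀ v ∈ Tdeg G x 0, ¬ G.Adj u v) ∧
    (∀ v ∈ Tdeg G x 0, ∀ u : V, G.Adj v u → u ∈ Tdeg G x 2) :=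
  girth_four_T0_independent_general G hconn htf hl x hinj hcyc
end
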